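/- arXiv:2411.07275 — 2 statements merged into one kernel-verified Lean document; each statement's English description precedes it below -/
import Mathlib

section
/- With α, r_α, β, r_β as in the construction (including the assumptions that ε ∈ r_β(x) for every variable x of each γᵢ and that every word in L_E(γᵢ, r_β) is ε or of the form 0u0 with |u|_{###} = 0), it holds that L_E(β, r_β) ⊆ L_E(α, r_α). -/
/-- The binary alphabet `{0, #}`: `false` represents `0`, `true` represents `#`. -/
abbrev Bin := Bool

/-- Patterns over `Σ ∪ X` with `Σ = Bin` and variable set `X = ℕ`. -/
abbrev Pattern := List (Bin ⊕ ℕ)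

/-- Applying a substitution (determined by its action on variables, and fixing every
terminal) to a pattern. -/
def applySub (s : ℕ → List Bin) : Pattern → List Bin
  | [] => []
  | c :: p => Sum.elim (fun a => [a]) s c ++ applySub s p

/-- The set of variables occurring in a pattern. -/
def varsOf (p : Pattern) : Set ℕ := {x | Sum.inr x ∈ p}

/-- A substitution is `r`-valid on `p` if every variable occurring in `p` is mapped into
its constraint language. -/
def Valid (r : ℕ → Set (List Bin)) (p : Pattern) (s : ℕ → List Bin) : Prop :=
  ∀ x ∈ varsOf p, s x ∈ r x

/-- The erasing constrained pattern language `L_E(p, r)`. -/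
def LangE (p : Pattern) (r : ℕ → Set (List Bin)) : Set (List Bin) :=
  {w | ∃ s, Valid r p s ∧ applySub s p = w}

/-- The word `v = 0###0`. -/
def vWord : List Bin := [false, true, true, true, false]

/-- `u` contains no occurrence of `###` as a factor, i.e. `|u|_{###} = 0`. -/
def NoTripleHash (u : List Bin) : Prop := ¬ ([true, true, true] <:+: u)

/-- The constraint language of the variable `α₁`:
`{0w0 : w ∈ Σ*, |w|_{###} = 0} ∪ {ε}`. -/
def Ra1 : Set (List Bin) :=
  {w | ∃ u, NoTripleHash u ∧ w = [false] ++ u ++ [false]} ∪ {[]}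

/-- The constraint language of the variable `ỹ`:
`Σ* \ { v u v : u ∈ Ra1, u ≠ ε }`. -/
def Ryt : Set (List Bin) :=
  {w | ¬ ∃ u ∈ Ra1, u ≠ [] ∧ w = vWord ++ u ++ vWord}

/-- All the data and assumptions of the construction: the patterns with regular
constraints `(α, r_α)` and `(β, r_β)` built from the predicates `γ₁, …, γ_μ`. -/
structure Construction where
  /-- the variable `x_v` of `α` -/
  xv : ℕ
  /-- the variable `α₁` of `α` -/
  a1 : ℕ
  /-- the variable `ỹ` of `α` -/
  yt : ℕ
  /-- the number of predicates -/
  μ : ℕ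
  /-- the variables `x₁, …, x_μ` of `β` -/
  xs : Fin μ → ℕ
  /-- the terminal-free predicate patterns `γ₁, …, γ_μ` (words over variables) -/
  γ : Fin μ → List ℕ
  /-- the variable `z̃` of `β` -/
  zt : ℕ
  /-- the constraint `r_α` -/
  rα : ℕ → Set (List Bin)
  /-- the constraint `r_β` -/
  rβ : ℕ → Set (List Bin)
  xv_ne_a1 : xv ≠ a1
  xv_ne_yt : xv ≠ yt
  a1_ne_yt : a1 ≠ yt
  hxv : rα xv = {[], vWord}
  ha1 : rα a1 = Ra1
  hyt : rα yt = Ryt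
  xs_inj : Function.Injective xs
  xs_ne_zt : ∀ i, xs i ≠ zt
  xs_fresh : ∀ i, xs i ≠ xv ∧ xs i ≠ a1 ∧ xs i ≠ yt
  zt_fresh : zt ≠ xv ∧ zt ≠ a1 ∧ zt ≠ yt
  γ_disj : ∀ i j, i ≠ j → ∀ x ∈ γ i, x ∉ γ j
  γ_fresh : ∀ i, ∀ x ∈ γ i,
    (∀ j, x ≠ xs j) ∧ x ≠ zt ∧ x ≠ xv ∧ x ≠ a1 ∧ x ≠ yt
  hrβxs : ∀ i, rβ (xs i) = {[], vWord}
  hrβzt : rβ zt = Ryt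
  hrβγ_eps : ∀ i, ∀ x ∈ γ i, [] ∈ rβ x
  hγ_lang : ∀ i, ∀ w ∈ LangE ((γ i).map Sum.inr) rβ,
    w = [] ∨ ∃ u, NoTripleHash u ∧ w = [false] ++ u ++ [false]

/-- The pattern `α = x_v α₁ x_v ỹ`. -/
def Construction.α (C : Construction) : Pattern :=
  [Sum.inr C.xv, Sum.inr C.a1, Sum.inr C.xv, Sum.inr C.yt]

/-- The pattern `β̂ᵢ = xᵢ γᵢ xᵢ`. -/
def Construction.βhat (C : Construction) (i : Fin C.μ) : Pattern :=
  Sum.inr (C.xs i) :: ((C.γ i).map Sum.inr ++ [Sum.inr (C.xs i)])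

/-- The pattern `β = β̂₁ ⋯ β̂_μ z̃`. -/
def Construction.β (C : Construction) : Pattern :=
  (List.ofFn C.βhat).flatten ++ [Sum.inr C.zt]

/-- `L_E(β, r_β) ⊆ L_E(α, r_α)`. -/
theorem LangE_beta_subset_LangE_alpha (C : Construction) :
    LangE C.β C.rβ ⊆ LangE C.α C.rα := by
  intro w _
  by_cases hw : w ∈ Ryt
  · refine ⟨fun x => if x = C.yt then w else [], ?_, ?_⟩
    · intro x hx
      simp only [Construction.α, varsOf, Set.mem_setOf_eq, List.mem_cons,
        List.not_mem_nil, or_false, Sum.inr.injEq] at hx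
      rcases hx with h | h | h | h
      all_goals subst h; beta_reduce
      · rw [if_neg C.xv_ne_yt, C.hxv]; exact Or.inl rfl
      · rw [if_neg C.a1_ne_yt, C.ha1]; exact Or.inr rfl
      · rw [if_neg C.xv_ne_yt, C.hxv]; exact Or.inl rfl
      · simpa [C.hyt] using hw
    · simp [Construction.α, applySub, if_neg C.xv_ne_yt, if_neg C.a1_ne_yt]
  · simp only [Ryt, Set.mem_setOf_eq, not_not] at hw
    obtain ⟨u, hu, hune, rfl⟩ := hw
    refine ⟨fun x => if x = C.xv then vWord else if x = C.a1 then u else [], ?_, ?_⟩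
    · intro x hx
      simp only [Construction.α, varsOf, Set.mem_setOf_eq, List.mem_cons,
        List.not_mem_nil, or_false, Sum.inr.injEq] at hx
      rcases hx with h | h | h | h
      all_goals subst h; beta_reduce
      · rw [if_pos rfl, C.hxv]; exact Or.inr rfl
      · rw [if_neg (Ne.symm C.xv_ne_a1), if_pos rfl, C.ha1]; exact hu
      · rw [if_pos rfl, C.hxv]; exact Or.inr rfl
      · rw [if_neg (Ne.symm C.xv_ne_yt), if_neg (Ne.symm C.a1_ne_yt), C.hyt]
        rintro ⟨u', _, _, h⟩
        have := congrArg List.length h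
        simp [vWord] at this
    · simp [Construction.α, applySub, if_neg (Ne.symm C.xv_ne_a1),
        if_neg (Ne.symm C.xv_ne_yt), if_neg (Ne.symm C.a1_ne_yt)]
end

section
/- With α, r_α, β, r_β as in the construction: if h is a substitution that is r_α-valid on α and h(α) = v 0u0 v for some u ∈ Σ* with |u|_{###} = 0, then h(α) ∈ L_E(β, r_β) if and only if there exist an index i ∈ {1,…,μ} and a substitution h' that is r_β-valid on β with h'(β̂ᵢ) = h(α). -/
/-!
In `w = v 0u0 v` with `|u|_{###} = 0` the factor `0###` occurs only at the two copies of `v`.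
Cut an `r_β`-image of `β` into the blocks `h'(β̂₁), …, h'(β̂_μ)` and `h'(z̃)`. A block
`x g x` with `x ∈ {ε, v}` and `g ∈ r_α(α₁)` that is a prefix of `w` is empty or all of `w`:
if `x = ε` then `g = 0u'0` would need `###` at the start of `u'`, and if `x = v` the second
`v` must be the second occurrence of `0###`, which forces `g = 0u0`. So the first nonempty
block is already `w`; if there is none, `h'(z̃) = w`, which `r_β(z̃)` forbids. Conversely, an
`r_β`-valid `h'` can be made to erase every variable outside `β̂ᵢ`, since `ε` is admissible
for all of them and `β̂ᵢ` shares no variable with the rest of `β`.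
-/

namespace List

variable {α : Type*}

theorem IsPrefix.of_append_cons_of_notMem {l u r : List α} {b : α} (hb : b ∉ l)
    (h : l <+: u ++ b :: r) : l <+: u := by
  induction l generalizing u with
  | nil => exact nil_prefix
  | cons a l ih =>
    cases u with
    | nil =>
      obtain ⟨rfl, -⟩ := cons_prefix_cons.mp h
      exact absurd mem_cons_self hb
    | cons c u =>
      rw [cons_append, cons_prefix_cons] at h
      obtain ⟨rfl, h⟩ := h
      exact cons_prefix_cons.mpr ⟨rfl, ih (fun hb' => hb (mem_cons_of_mem a hb')) h⟩

theorem eq_nil_or_infix_of_cons_append_eq {l r r' as : List α} {b : α} (hb : b ∉ l)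
    (h : b :: (l ++ r) = as ++ b :: (l ++ r')) : as = [] ∨ l <:+: as := by
  rcases as with _ | ⟨a, as⟩
  · exact Or.inl rfl
  · obtain ⟨-, h⟩ := cons_eq_cons.mp h
    exact Or.inr (infix_cons (IsPrefix.of_append_cons_of_notMem hb ⟨r, h⟩).isInfix)

theorem eq_of_append_cons_append_eq {l x y r r' : List α} {b : α} (hb : b ∉ l)
    (hx : ¬ l <:+: x) (hy : ¬ l <:+: y) (h : x ++ b :: (l ++ r) = y ++ b :: (l ++ r')) :
    x = y := by
  rcases append_eq_append_iff.mp h with ⟨as, rfl, has⟩ | ⟨bs, rfl, hbs⟩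
  · rcases eq_nil_or_infix_of_cons_append_eq hb has with rfl | hl
    · exact (append_nil x).symm
    · exact absurd (hl.trans (suffix_append x as).isInfix) hy
  · rcases eq_nil_or_infix_of_cons_append_eq hb hbs with rfl | hl
    · exact append_nil y
    · exact absurd (hl.trans (suffix_append y bs).isInfix) hx

theorem eq_or_mem_of_flatten_append_eq {L : List (List α)} {z w : List α}
    (hL : ∀ b ∈ L, b = [] ∨ ∀ t, b ++ t = w → t = []) (h : L.flatten ++ z = w) :
    z = w ∨ w ∈ L := by
  induction L with
  | nil => exact Or.inl h
  | cons b L ih =>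
    rw [flatten_cons, append_assoc] at h
    rcases hL b mem_cons_self with rfl | hb
    · exact (ih (fun c hc => hL c (mem_cons_of_mem _ hc)) h).imp_right (mem_cons_of_mem _)
    · rw [hb _ h, append_nil] at h
      exact Or.inr (h ▸ mem_cons_self)

theorem flatten_ofFn_eq_of_forall_ne_eq_nil {n : ℕ} (f : Fin n → List α) (i : Fin n)
    (h : ∀ j ≠ i, f j = []) : (ofFn f).flatten = f i := by
  induction n with
  | zero => exact i.elim0
  | succ n ih =>
    rw [ofFn_succ, flatten_cons]
    cases i using Fin.cases with
    | zero =>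
      simp [h _ (Fin.succ_ne_zero _)]
    | succ j =>
      rw [h 0 (Fin.succ_ne_zero j).symm, ih _ j fun k hk => h _ (by simpa using hk)]
      rfl

end List

theorem NoTripleHash.append_false {u : List Bin} (hu : NoTripleHash u) :
    NoTripleHash (u ++ [false]) := by
  intro h
  rcases List.infix_concat_iff.mp h with h | h
  · rcases List.suffix_concat_iff.mp h with h | ⟨t, h, -⟩
    · simp at h
    · simpa using congrArg List.getLast? h
  · exact hu h

theorem NoTripleHash.not_prefix_append_false {u r : List Bin} (hu : NoTripleHash u) :
    ¬ [true, true, true] <+: u ++ false :: r :=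
  fun h => hu (h.of_append_cons_of_notMem (by decide)).isInfix

theorem applySub_eq_flatten (s : ℕ → List Bin) (p : Pattern) :
    applySub s p = (p.map (Sum.elim (fun a => [a]) s)).flatten := by
  induction p with
  | nil => rfl
  | cons c p ih => simp [applySub, ih]

theorem applySub_append (s : ℕ → List Bin) (p q : Pattern) :
    applySub s (p ++ q) = applySub s p ++ applySub s q := by
  simp [applySub_eq_flatten]

theorem applySub_map_inr (s : ℕ → List Bin) (l : List ℕ) :
    applySub s (l.map Sum.inr) = (l.map s).flatten := by
  simp [applySub_eq_flatten, Function.comp_def]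

theorem applySub_congr {s s' : ℕ → List Bin} {p : Pattern}
    (h : ∀ x ∈ varsOf p, s x = s' x) : applySub s p = applySub s' p := by
  rw [applySub_eq_flatten, applySub_eq_flatten]
  congr 1
  refine List.map_congr_left fun c hc => ?_
  cases c with
  | inl a => rfl
  | inr x => exact h x hc

theorem Valid.mono {r : ℕ → Set (List Bin)} {p q : Pattern} {s : ℕ → List Bin}
    (h : Valid r p s) (hqp : varsOf q ⊆ varsOf p) : Valid r q s :=
  fun x hx => h x (hqp hx)

theorem nil_mem_Ryt : [] ∈ Ryt := by
  rintro ⟨u, -, -, h⟩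
  simp [vWord] at h

theorem notMem_Ryt {u : List Bin} (hu : NoTripleHash u) :
    vWord ++ ([false] ++ u ++ [false]) ++ vWord ∉ Ryt :=
  fun h => h ⟨_, Or.inl ⟨u, hu, rfl⟩, by simp, rfl⟩

theorem block_eq_nil_or_maximal {x g u : List Bin} (hx : x = [] ∨ x = vWord) (hg : g ∈ Ra1)
    (hu : NoTripleHash u) :
    x ++ (g ++ x) = [] ∨
      ∀ t, x ++ (g ++ x) ++ t = vWord ++ ([false] ++ u ++ [false]) ++ vWord → t = [] := by
  rcases hx with rfl | rfl <;> rcases hg with ⟨u', hu', rfl⟩ | rfl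
  · refine Or.inr fun t ht => absurd ?_ (hu'.not_prefix_append_false (r := t))
    exact ⟨false :: ([false] ++ u ++ [false] ++ vWord), by simpa [vWord] using ht.symm⟩
  · exact Or.inl rfl
  · refine Or.inr fun t ht => ?_
    have hmarker : u' ++ [false] ++ false :: ([true, true, true] ++ false :: t) =
        u ++ [false] ++ false :: ([true, true, true] ++ [false]) := by
      simpa [vWord] using ht
    obtain rfl : u' = u := List.append_cancel_right
      (List.eq_of_append_cons_append_eq (by decide) hu'.append_false hu.append_false hmarker)
    simpa [vWord] using ht
  · refine Or.inr fun t ht => absurd ?_ (hu.not_prefix_append_false (r := vWord))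
    exact ⟨false :: t, by simpa [vWord] using ht⟩

namespace Construction

variable (C : Construction)

theorem mem_varsOf_βhat {i : Fin C.μ} {x : ℕ} :
    x ∈ varsOf (C.βhat i) ↔ x = C.xs i ∨ x ∈ C.γ i := by
  simp [βhat, varsOf, or_comm]

theorem mem_varsOf_β {x : ℕ} :
    x ∈ varsOf C.β ↔ (∃ i, x ∈ varsOf (C.βhat i)) ∨ x = C.zt := by
  simp [β, varsOf]

theorem varsOf_βhat_subset_β (i : Fin C.μ) : varsOf (C.βhat i) ⊆ varsOf C.β :=
  fun _ hx => C.mem_varsOf_β.mpr (Or.inl ⟨i, hx⟩)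

theorem disjoint_varsOf_βhat {i j : Fin C.μ} (hij : i ≠ j) :
    Disjoint (varsOf (C.βhat i)) (varsOf (C.βhat j)) := by
  refine Set.disjoint_left.mpr fun x hi hj => ?_
  rcases C.mem_varsOf_βhat.mp hi with rfl | hi <;> rcases C.mem_varsOf_βhat.mp hj with hj | hj
  · exact hij (C.xs_inj hj)
  · exact (C.γ_fresh j _ hj).1 i rfl
  · exact (C.γ_fresh i _ hi).1 j hj
  · exact C.γ_disj i j hij x hi hj

theorem zt_notMem_varsOf_βhat (i : Fin C.μ) : C.zt ∉ varsOf (C.βhat i) := by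
  rw [mem_varsOf_βhat]
  rintro (h | h)
  · exact C.xs_ne_zt i h.symm
  · exact (C.γ_fresh i _ h).2.1 rfl

theorem nil_mem_rβ {x : ℕ} (hx : x ∈ varsOf C.β) : [] ∈ C.rβ x := by
  rcases C.mem_varsOf_β.mp hx with ⟨i, hx⟩ | rfl
  · rcases C.mem_varsOf_βhat.mp hx with rfl | hx
    · simp [C.hrβxs]
    · exact C.hrβγ_eps i x hx
  · exact C.hrβzt ▸ nil_mem_Ryt

theorem applySub_βhat (s : ℕ → List Bin) (i : Fin C.μ) :
    applySub s (C.βhat i) = s (C.xs i) ++ (applySub s ((C.γ i).map Sum.inr) ++ s (C.xs i)) := by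
  simp [βhat, applySub, applySub_append]

theorem applySub_β (s : ℕ → List Bin) :
    applySub s C.β = (List.ofFn fun i => applySub s (C.βhat i)).flatten ++ s C.zt := by
  simp [β, applySub_eq_flatten, List.flatten_flatten, List.map_ofFn, Function.comp_def]

theorem eq_nil_or_eq_vWord_of_valid_β {s : ℕ → List Bin} (hs : Valid C.rβ C.β s) (i : Fin C.μ) :
    s (C.xs i) = [] ∨ s (C.xs i) = vWord := by
  have := hs _ (C.varsOf_βhat_subset_β i (C.mem_varsOf_βhat.mpr (Or.inl rfl)))
  rwa [C.hrβxs] at this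

theorem applySub_γ_mem_Ra1_of_valid_β {s : ℕ → List Bin} (hs : Valid C.rβ C.β s)
    (i : Fin C.μ) : applySub s ((C.γ i).map Sum.inr) ∈ Ra1 := by
  refine (C.hγ_lang i _ ⟨s, hs.mono fun x hx => ?_, rfl⟩).symm
  refine C.varsOf_βhat_subset_β i (C.mem_varsOf_βhat.mpr (Or.inr ?_))
  simpa [varsOf] using hx

theorem exists_βhat_eq_of_mem_langE_β {u : List Bin} (hu : NoTripleHash u)
    (hw : vWord ++ ([false] ++ u ++ [false]) ++ vWord ∈ LangE C.β C.rβ) :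
    ∃ i : Fin C.μ, ∃ s, Valid C.rβ C.β s ∧
      applySub s (C.βhat i) = vWord ++ ([false] ++ u ++ [false]) ++ vWord := by
  obtain ⟨s, hs, hsw⟩ := hw
  rw [applySub_β] at hsw
  have hblocks : ∀ b ∈ List.ofFn fun i => applySub s (C.βhat i), b = [] ∨
      ∀ t, b ++ t = vWord ++ ([false] ++ u ++ [false]) ++ vWord → t = [] := by
    rintro _ hb
    obtain ⟨i, rfl⟩ := List.mem_ofFn.mp hb
    rw [applySub_βhat]
    exact block_eq_nil_or_maximal (C.eq_nil_or_eq_vWord_of_valid_β hs i)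
      (C.applySub_γ_mem_Ra1_of_valid_β hs i) hu
  rcases List.eq_or_mem_of_flatten_append_eq hblocks hsw with hzt | hmem
  · have := hs _ (C.mem_varsOf_β.mpr (Or.inr rfl))
    rw [C.hrβzt, hzt] at this
    exact absurd this (notMem_Ryt hu)
  · obtain ⟨i, hi⟩ := List.mem_ofFn.mp hmem
    exact ⟨i, s, hs, hi⟩

theorem applySub_βhat_mem_langE_β {s : ℕ → List Bin} (hs : Valid C.rβ C.β s) (i : Fin C.μ) :
    applySub s (C.βhat i) ∈ LangE C.β C.rβ := by
  classical
  let s' : ℕ → List Bin := fun x => if x ∈ varsOf (C.βhat i) then s x else []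
  have hs'_on : ∀ x ∈ varsOf (C.βhat i), s' x = s x := fun x hx => if_pos hx
  have hs'_off : ∀ x ∉ varsOf (C.βhat i), s' x = [] := fun x hx => if_neg hx
  have hvanish : ∀ j ≠ i, applySub s' (C.βhat j) = [] := by
    intro j hji
    rw [applySub_congr (s' := fun _ => []) fun x hx =>
      hs'_off x ((C.disjoint_varsOf_βhat hji).notMem_of_mem_left hx)]
    simp [applySub_βhat, applySub_map_inr]
  refine ⟨s', fun x hx => ?_, ?_⟩
  · by_cases hxi : x ∈ varsOf (C.βhat i)
    · exact hs'_on x hxi ▸ hs x hx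
    · exact hs'_off x hxi ▸ C.nil_mem_rβ hx
  · rw [applySub_β, List.flatten_ofFn_eq_of_forall_ne_eq_nil _ i hvanish,
      hs'_off _ (C.zt_notMem_varsOf_βhat i), List.append_nil, applySub_congr hs'_on]

end Construction

theorem special_words_in_beta_iff_some_predicate_general (C : Construction)
    (h : ℕ → List Bin)
    (u : List Bin) (hu : NoTripleHash u)
    (hform : applySub h C.α = vWord ++ ([false] ++ u ++ [false]) ++ vWord) :
    applySub h C.α ∈ LangE C.β C.rβ ↔
      ∃ i : Fin C.μ, ∃ h' : ℕ → List Bin,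
        Valid C.rβ C.β h' ∧ applySub h' (C.βhat i) = applySub h C.α := by
  constructor
  · rw [hform]
    exact C.exists_βhat_eq_of_mem_langE_β hu
  · rintro ⟨i, h', hh', hi⟩
    exact hi ▸ C.applySub_βhat_mem_langE_β hh' i

/-- If `h` is `r_α`-valid on `α` and `h(α) = v 0u0 v` with `|u|_{###} = 0`, then
`h(α) ∈ L_E(β, r_β)` iff some `β̂ᵢ` produces `h(α)` under an `r_β`-valid substitution. -/
theorem special_words_in_beta_iff_some_predicate (C : Construction)
    (h : ℕ → List Bin) (hvalid : Valid C.rα C.α h)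
    (u : List Bin) (hu : NoTripleHash u)
    (hform : applySub h C.α = vWord ++ ([false] ++ u ++ [false]) ++ vWord) :
    applySub h C.α ∈ LangE C.β C.rβ ↔
      ∃ i : Fin C.μ, ∃ h' : ℕ → List Bin,
        Valid C.rβ C.β h' ∧ applySub h' (C.βhat i) = applySub h C.α :=
  special_words_in_beta_iff_some_predicate_general C h u hu hform
end
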